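/- Let H be a seminormal C-monoid in a factorial monoid F. Then the reduced class semigroup C*(H,F) is a union of groups (a Clifford semigroup). -/
import Mathlib


/-- The factorial monoid `F = F^× × ℱ(P)`, with unit group `Fu` and free
abelian monoid `ℱ(P)` modeled by `Multiplicative (P →₀ ℕ)`. -/
abbrev FM (Fu P : Type*) [CommGroup Fu] : Type _ := Fu × Multiplicative (P →₀ ℕ)

/-- `H`-equivalence on `F`: `y ~ y'` iff for all `x ∈ F`, `x*y ∈ H ↔ x*y' ∈ H`. -/
def HRel {M : Type*} [CommMonoid M] (H : Submonoid M) (y y' : M) : Prop :=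
  ∀ x : M, x * y ∈ H ↔ x * y' ∈ H

/-- `y ∈ (F \ F^×) ∪ {1}`: the representatives of the reduced class semigroup. -/
def NU1 {M : Type*} [Monoid M] (y : M) : Prop := ¬ IsUnit y ∨ y = 1

/-- The reduced class semigroup `C*(H,F)` is finite: there are finitely many
`H`-equivalence classes of elements of `(F \ F^×) ∪ {1}`. -/
def CStarFinite {M : Type*} [CommMonoid M] (H : Submonoid M) : Prop :=
  ∃ (n : ℕ) (f : Fin n → M), ∀ y : M, NU1 y → ∃ i : Fin n, HRel H y (f i)

/-- `C*(H,F)` is a union of groups: each class `[y]` lies in some subgroup,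
i.e. in the constituent group of some idempotent `[e]`: `[e] + [e] = [e]`,
`[y] + [e] = [y]` and `[y] + [z] = [e]` for some class `[z]`. -/
def CStarUnionOfGroups {M : Type*} [CommMonoid M] (H : Submonoid M) : Prop :=
  ∀ y : M, NU1 y → ∃ e : M, NU1 e ∧ HRel H (e * e) e ∧ HRel H (y * e) y ∧
    ∃ z : M, NU1 z ∧ HRel H (y * z) e

/-- `H^× = H ∩ F^×`: every element of `H` which is invertible in `F` has its
inverse in `H`. -/
def UnitsCond {M : Type*} [Monoid M] (H : Submonoid M) : Prop :=
  ∀ u : Mˣ, (u : M) ∈ H → ((u⁻¹ : Mˣ) : M) ∈ H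

/-- `H` is seminormal: for `x = a/b ∈ q(H)` (`a, b ∈ H`) with `x^n ∈ H` for all
sufficiently large `n` (i.e. `a^n = h_n * b^n` with `h_n ∈ H`), one has `x ∈ H`
(i.e. `a = h * b` with `h ∈ H`). -/
def SeminormalSub {M : Type*} [CommMonoid M] (H : Submonoid M) : Prop :=
  ∀ a b : M, a ∈ H → b ∈ H → (∃ m : ℕ, ∀ n ≥ m, ∃ h ∈ H, a ^ n = h * b ^ n) →
    ∃ h ∈ H, a = h * b
section helpers
variable {M : Type*} [CommMonoid M] (H : Submonoid M)

lemma hrel_refl' (y : M) : HRel H y y := fun _ => Iff.rfl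

lemma hrel_symm' {y y' : M} (h : HRel H y y') : HRel H y' y := fun x => (h x).symm

lemma hrel_trans' {a b c : M} (h1 : HRel H a b) (h2 : HRel H b c) : HRel H a c :=
  fun x => (h1 x).trans (h2 x)

lemma hrel_mul' (c : M) {y y' : M} (h : HRel H y y') : HRel H (c * y) (c * y') := fun x => by
  rw [← mul_assoc, ← mul_assoc]; exact h (x * c)

end helpers


/-- Let `H` be a seminormal C-monoid in a factorial monoid `F` (so
`H^× = H ∩ F^×` and the reduced class semigroup `C*(H,F)` is finite).  Then
`C*(H,F)` is a union of groups (a Clifford semigroup). -/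
theorem stmt_12 {Fu P : Type*} [CommGroup Fu] (H : Submonoid (FM Fu P))
    (hux : UnitsCond H) (hfin : CStarFinite H) (hsn : SeminormalSub H) :
    CStarUnionOfGroups H := by
  intro y hy
  rcases eq_or_ne y 1 with rfl | hy1
  · exact ⟨1, Or.inr rfl, fun x => by simp, fun x => by simp, 1, Or.inr rfl, fun x => by simp⟩
  have hyu : ¬ IsUnit y := hy.resolve_right hy1
  have hpow : ∀ k : ℕ, 1 ≤ k → ¬ IsUnit (y ^ k) := fun k hk hu =>
    hyu ((isUnit_pow_iff (by omega)).mp hu)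
  obtain ⟨n, f, hf⟩ := hfin
  have hsel : ∀ k : Fin (n + 1), ∃ i : Fin n, HRel H (y ^ ((k : ℕ) + 1)) (f i) :=
    fun k => hf _ (Or.inl (hpow _ (by omega)))
  choose g hg using hsel
  obtain ⟨k1, k2, hne, heq⟩ := Fintype.exists_ne_map_eq_of_card_lt g (by simp)
  obtain ⟨m, d, hm, hd, hbase⟩ :
      ∃ m d : ℕ, 1 ≤ m ∧ 1 ≤ d ∧ HRel H (y ^ m) (y ^ (m + d)) := by
    have hg12 : HRel H (y ^ ((k1 : ℕ) + 1)) (y ^ ((k2 : ℕ) + 1)) :=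
      hrel_trans' H (hg k1) (by rw [heq]; exact hrel_symm' H (hg k2))
    have hne' : (k1 : ℕ) ≠ (k2 : ℕ) := fun h => hne (Fin.ext h)
    rcases lt_or_gt_of_ne hne' with hlt | hlt
    · refine ⟨(k1 : ℕ) + 1, (k2 : ℕ) - (k1 : ℕ), by omega, by omega, ?_⟩
      have he : (k1 : ℕ) + 1 + ((k2 : ℕ) - (k1 : ℕ)) = (k2 : ℕ) + 1 := by omega
      rw [he]; exact hg12
    · refine ⟨(k2 : ℕ) + 1, (k1 : ℕ) - (k2 : ℕ), by omega, by omega, ?_⟩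
      have he : (k2 : ℕ) + 1 + ((k1 : ℕ) - (k2 : ℕ)) = (k1 : ℕ) + 1 := by omega
      rw [he]; exact hrel_symm' H hg12
  -- periodicity
  have hstep : ∀ c : ℕ, HRel H (y ^ (m + c)) (y ^ (m + c + d)) := by
    intro c
    have h := hrel_mul' H (y ^ c) hbase
    rw [← pow_add, ← pow_add] at h
    have e1 : c + m = m + c := by omega
    have e2 : c + (m + d) = m + c + d := by omega
    rw [e1, e2] at h
    exact h
  have hP : ∀ c k : ℕ, HRel H (y ^ (m + c)) (y ^ (m + c + k * d)) := by
    intro c k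
    induction k with
    | zero => simpa using hrel_refl' H (y ^ (m + c))
    | succ k ih =>
        have h2 := hstep (c + k * d)
        have e1 : m + (c + k * d) = m + c + k * d := by omega
        have e2 : m + c + k * d + d = m + c + (k + 1) * d := by ring
        rw [e1, e2] at h2
        exact hrel_trans' H ih h2
  have hQ : ∀ (a k : ℕ) (x : FM Fu P), m ≤ a → (x * y ^ a ∈ H ↔ x * y ^ (a + k * d) ∈ H) := by
    intro a k x ha
    obtain ⟨c, rfl⟩ : ∃ c, a = m + c := ⟨a - m, by omega⟩
    exact hP c k x
  have hT : m ≤ m * d := Nat.le_mul_of_pos_right m (by omega)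
  have hT1 : 1 ≤ m * d := hm.trans hT
  -- the key step, using seminormality
  have key : ∀ x : FM Fu P, x * y ∈ H ↔ x * y ^ (1 + m * d) ∈ H := by
    intro x
    constructor
    · intro hxy
      have hqpow : ∀ nn, m ≤ nn → (x * y ^ (1 + m * d)) ^ nn ∈ H := by
        intro nn hnn
        have h1 : (x * y) ^ nn ∈ H := pow_mem hxy nn
        rw [mul_pow] at h1
        have h2 := (hQ nn (nn * m) (x ^ nn) hnn).mp h1
        have he : (x * y ^ (1 + m * d)) ^ nn = x ^ nn * y ^ (nn + nn * m * d) := by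
          rw [mul_pow, ← pow_mul, show (1 + m * d) * nn = nn + nn * m * d from by ring]
        rw [he]; exact h2
      have hb : (x * y) ^ m ∈ H := pow_mem hxy m
      have ha : (x * y ^ (1 + m * d)) * (x * y) ^ m ∈ H := by
        have h1 : (x * y) ^ (m + 1) ∈ H := pow_mem hxy (m + 1)
        rw [mul_pow] at h1
        have h2 := (hQ (m + 1) m (x ^ (m + 1)) (by omega)).mp h1
        have he : (x * y ^ (1 + m * d)) * (x * y) ^ m = x ^ (m + 1) * y ^ (m + 1 + m * d) := by
          rw [mul_pow]
          simp [pow_add, pow_succ, mul_comm, mul_left_comm, mul_assoc]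
        rw [he]; exact h2
      obtain ⟨h, hh, heq'⟩ := hsn _ _ ha hb
        ⟨m, fun nn hnn => ⟨(x * y ^ (1 + m * d)) ^ nn, hqpow nn hnn, by rw [mul_pow]⟩⟩
      have : x * y ^ (1 + m * d) = h := mul_right_cancel heq'
      rw [this]; exact hh
    · intro hq
      have hqpow : ∀ nn, m ≤ nn → (x * y) ^ nn ∈ H := by
        intro nn hnn
        have h1 : (x * y ^ (1 + m * d)) ^ nn ∈ H := pow_mem hq nn
        have he : (x * y ^ (1 + m * d)) ^ nn = x ^ nn * y ^ (nn + nn * m * d) := by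
          rw [mul_pow, ← pow_mul, show (1 + m * d) * nn = nn + nn * m * d from by ring]
        rw [he] at h1
        have h2 := (hQ nn (nn * m) (x ^ nn) hnn).mpr h1
        rw [mul_pow]; exact h2
      have hb : (x * y ^ (1 + m * d)) ^ m ∈ H := pow_mem hq m
      have ha : (x * y) * (x * y ^ (1 + m * d)) ^ m ∈ H := by
        have h1 : (x * y ^ (1 + m * d)) ^ (m + 1) ∈ H := pow_mem hq (m + 1)
        have he1 : (x * y ^ (1 + m * d)) ^ (m + 1)
            = x ^ (m + 1) * y ^ ((m + 1) + (m + 1) * m * d) := by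
          rw [mul_pow, ← pow_mul, show (1 + m * d) * (m + 1) = (m + 1) + (m + 1) * m * d from by ring]
        rw [he1] at h1
        have h2 := (hQ (m + 1) ((m + 1) * m) (x ^ (m + 1)) (by omega)).mpr h1
        have h3 := (hQ (m + 1) (m * m) (x ^ (m + 1)) (by omega)).mp h2
        have he2 : (x * y) * (x * y ^ (1 + m * d)) ^ m
            = x ^ (m + 1) * y ^ ((m + 1) + m * m * d) := by
          rw [mul_pow, ← pow_mul, show (1 + m * d) * m = m + m * m * d from by ring]
          simp [pow_add, pow_succ, mul_comm, mul_left_comm, mul_assoc]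
        rw [he2]; exact h3
      obtain ⟨h, hh, heq'⟩ := hsn _ _ ha hb
        ⟨m, fun nn hnn => ⟨(x * y) ^ nn, hqpow nn hnn, by rw [mul_pow]⟩⟩
      have : x * y = h := mul_right_cancel heq'
      rw [this]; exact hh
  -- assemble
  refine ⟨y ^ (m * d), Or.inl (hpow _ hT1), ?_, ?_, y ^ (m * d - 1), ?_, ?_⟩
  · intro x
    rw [← pow_add]
    exact ((hQ (m * d) m x hT)).symm
  · intro x
    have he : y * y ^ (m * d) = y ^ (1 + m * d) := by rw [pow_add, pow_one]
    rw [he]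
    exact (key x).symm
  · rcases Nat.eq_or_lt_of_le hT1 with h1 | h1
    · right; rw [← h1]; simp
    · exact Or.inl (hpow _ (Nat.le_sub_one_of_lt h1))
  · have he : y * y ^ (m * d - 1) = y ^ (m * d) := by
      rw [← pow_succ', Nat.sub_add_cancel hT1]
    rw [he]
    exact hrel_refl' H _
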